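/- A closed model category C is right proper if and only if for every weak equivalence g: X→Y in C, the Quillen adjunction (g_*, g^!): (C↓X) → (C↓Y) is a Quillen equivalence. -/

import Mathlib

open CategoryTheory CategoryTheory.Limits

universe v u v' u'

/-- `f` is a retract of `g` in the arrow category. -/
def IsRetractOfArrow {C : Type u} [Category.{v} C] {A B A' B' : C}
    (f : A ⟶ B) (g : A' ⟶ B') : Prop :=
  ∃ (i : Arrow.mk f ⟶ Arrow.mk g) (r : Arrow.mk g ⟶ Arrow.mk f), i ≫ r = 𝟙 (Arrow.mk f)

/-- A (closed) model structure on a category `C`, in the sense of Quillen: three classes of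
morphisms (cofibrations, fibrations, weak equivalences) satisfying the two-out-of-three
axiom, closure under retracts, the lifting axioms and the factorization axioms. -/
structure ModelStruct (C : Type u) [Category.{v} C] : Type (max u v) where
  cof : MorphismProperty C
  fib : MorphismProperty C
  weq : MorphismProperty C
  weq_comp : ∀ {X Y Z : C} (f : X ⟶ Y) (g : Y ⟶ Z), weq f → weq g → weq (f ≫ g)
  weq_cancel_left : ∀ {X Y Z : C} (f : X ⟶ Y) (g : Y ⟶ Z), weq f → weq (f ≫ g) → weq g
  weq_cancel_right : ∀ {X Y Z : C} (f : X ⟶ Y) (g : Y ⟶ Z), weq g → weq (f ≫ g) → weq f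
  cof_retract : ∀ {A B A' B' : C} {f : A ⟶ B} {g : A' ⟶ B'},
    IsRetractOfArrow f g → cof g → cof f
  fib_retract : ∀ {A B A' B' : C} {f : A ⟶ B} {g : A' ⟶ B'},
    IsRetractOfArrow f g → fib g → fib f
  weq_retract : ∀ {A B A' B' : C} {f : A ⟶ B} {g : A' ⟶ B'},
    IsRetractOfArrow f g → weq g → weq f
  lifting_cof_trivFib : ∀ {A B X Y : C} (i : A ⟶ B) (p : X ⟶ Y),
    cof i → fib p → weq p → HasLiftingProperty i p
  lifting_trivCof_fib : ∀ {A B X Y : C} (i : A ⟶ B) (p : X ⟶ Y),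
    cof i → weq i → fib p → HasLiftingProperty i p
  factor_cof_trivFib : ∀ {X Y : C} (f : X ⟶ Y),
    ∃ (Z : C) (i : X ⟶ Z) (p : Z ⟶ Y), cof i ∧ fib p ∧ weq p ∧ i ≫ p = f
  factor_trivCof_fib : ∀ {X Y : C} (f : X ⟶ Y),
    ∃ (Z : C) (i : X ⟶ Z) (p : Z ⟶ Y), cof i ∧ weq i ∧ fib p ∧ i ≫ p = f

variable {C : Type u} [Category.{v} C]

/-- An object is cofibrant if the unique map from the initial object to it is a cofibration. -/
def ModelStruct.Cofibrant [HasInitial C] (M : ModelStruct C) (A : C) : Prop :=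
  M.cof (initial.to A)

/-- An object is fibrant if the unique map from it to the terminal object is a fibration. -/
def ModelStruct.Fibrant [HasTerminal C] (M : ModelStruct C) (A : C) : Prop :=
  M.fib (terminal.from A)

/-- The induced model structure on the coslice category `(X ↓ C)`: a morphism is a
cofibration, fibration or weak equivalence iff its underlying morphism in `C` is one. -/
def ModelStruct.under (M : ModelStruct C) (X : C) : ModelStruct (Under X) where
  cof _ _ f := M.cof f.right
  fib _ _ f := M.fib f.right
  weq _ _ f := M.weq f.right
  weq_comp f g hf hg := by simpa using M.weq_comp f.right g.right hf hg
  weq_cancel_left f g hf hfg := M.weq_cancel_left f.right g.right hf (by simpa using hfg)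
  weq_cancel_right f g hg hfg := M.weq_cancel_right f.right g.right hg (by simpa using hfg)
  cof_retract := fun ⟨i, r, hir⟩ hg => M.cof_retract
    ⟨(Under.forget X).mapArrow.map i, (Under.forget X).mapArrow.map r,
      by erw [← CategoryTheory.Functor.map_comp, hir, CategoryTheory.Functor.map_id]; rfl⟩ hg
  fib_retract := fun ⟨i, r, hir⟩ hg => M.fib_retract
    ⟨(Under.forget X).mapArrow.map i, (Under.forget X).mapArrow.map r,
      by erw [← CategoryTheory.Functor.map_comp, hir, CategoryTheory.Functor.map_id]; rfl⟩ hg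
  weq_retract := fun ⟨i, r, hir⟩ hg => M.weq_retract
    ⟨(Under.forget X).mapArrow.map i, (Under.forget X).mapArrow.map r,
      by erw [← CategoryTheory.Functor.map_comp, hir, CategoryTheory.Functor.map_id]; rfl⟩ hg
  lifting_cof_trivFib i p hi hp hp' := by
    constructor
    intro f g sq
    haveI := M.lifting_cof_trivFib i.right p.right hi hp hp'
    have sq' : CommSq f.right i.right p.right g.right :=
      ⟨by rw [← Under.comp_right, sq.w, Under.comp_right]⟩
    exact ⟨⟨⟨Under.homMk sq'.lift (by
        rw [← Under.w i, Category.assoc, sq'.fac_left, Under.w f]),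
      by ext; exact sq'.fac_left, by ext; exact sq'.fac_right⟩⟩⟩
  lifting_trivCof_fib i p hi hi' hp := by
    constructor
    intro f g sq
    haveI := M.lifting_trivCof_fib i.right p.right hi hi' hp
    have sq' : CommSq f.right i.right p.right g.right :=
      ⟨by rw [← Under.comp_right, sq.w, Under.comp_right]⟩
    exact ⟨⟨⟨Under.homMk sq'.lift (by
        rw [← Under.w i, Category.assoc, sq'.fac_left, Under.w f]),
      by ext; exact sq'.fac_left, by ext; exact sq'.fac_right⟩⟩⟩
  factor_cof_trivFib {A B} f := by
    obtain ⟨Z, i, p, hi, hp, hp', hfac⟩ := M.factor_cof_trivFib f.right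
    exact ⟨Under.mk (A.hom ≫ i), Under.homMk i rfl,
      Under.homMk p (by rw [show (Under.mk (A.hom ≫ i)).hom = A.hom ≫ i from rfl, Category.assoc, hfac, Under.w f]),
      hi, hp, hp', by ext; exact hfac⟩
  factor_trivCof_fib {A B} f := by
    obtain ⟨Z, i, p, hi, hi', hp, hfac⟩ := M.factor_trivCof_fib f.right
    exact ⟨Under.mk (A.hom ≫ i), Under.homMk i rfl,
      Under.homMk p (by rw [show (Under.mk (A.hom ≫ i)).hom = A.hom ≫ i from rfl, Category.assoc, hfac, Under.w f]),
      hi, hi', hp, by ext; exact hfac⟩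

/-- The induced model structure on the slice category `(C ↓ X)`: a morphism is a
cofibration, fibration or weak equivalence iff its underlying morphism in `C` is one. -/
def ModelStruct.over (M : ModelStruct C) (X : C) : ModelStruct (Over X) where
  cof _ _ f := M.cof f.left
  fib _ _ f := M.fib f.left
  weq _ _ f := M.weq f.left
  weq_comp f g hf hg := by simpa using M.weq_comp f.left g.left hf hg
  weq_cancel_left f g hf hfg := M.weq_cancel_left f.left g.left hf (by simpa using hfg)
  weq_cancel_right f g hg hfg := M.weq_cancel_right f.left g.left hg (by simpa using hfg)
  cof_retract := fun ⟨i, r, hir⟩ hg => M.cof_retract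
    ⟨(Over.forget X).mapArrow.map i, (Over.forget X).mapArrow.map r,
      by erw [← CategoryTheory.Functor.map_comp, hir, CategoryTheory.Functor.map_id]; rfl⟩ hg
  fib_retract := fun ⟨i, r, hir⟩ hg => M.fib_retract
    ⟨(Over.forget X).mapArrow.map i, (Over.forget X).mapArrow.map r,
      by erw [← CategoryTheory.Functor.map_comp, hir, CategoryTheory.Functor.map_id]; rfl⟩ hg
  weq_retract := fun ⟨i, r, hir⟩ hg => M.weq_retract
    ⟨(Over.forget X).mapArrow.map i, (Over.forget X).mapArrow.map r,
      by erw [← CategoryTheory.Functor.map_comp, hir, CategoryTheory.Functor.map_id]; rfl⟩ hg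
  lifting_cof_trivFib i p hi hp hp' := by
    constructor
    intro f g sq
    haveI := M.lifting_cof_trivFib i.left p.left hi hp hp'
    have sq' : CommSq f.left i.left p.left g.left :=
      ⟨by rw [← Over.comp_left, sq.w, Over.comp_left]⟩
    exact ⟨⟨⟨Over.homMk sq'.lift (by
        rw [← Over.w p, ← Category.assoc, sq'.fac_right, Over.w g]),
      by ext; exact sq'.fac_left, by ext; exact sq'.fac_right⟩⟩⟩
  lifting_trivCof_fib i p hi hi' hp := by
    constructor
    intro f g sq
    haveI := M.lifting_trivCof_fib i.left p.left hi hi' hp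
    have sq' : CommSq f.left i.left p.left g.left :=
      ⟨by rw [← Over.comp_left, sq.w, Over.comp_left]⟩
    exact ⟨⟨⟨Over.homMk sq'.lift (by
        rw [← Over.w p, ← Category.assoc, sq'.fac_right, Over.w g]),
      by ext; exact sq'.fac_left, by ext; exact sq'.fac_right⟩⟩⟩
  factor_cof_trivFib {A B} f := by
    obtain ⟨Z, i, p, hi, hp, hp', hfac⟩ := M.factor_cof_trivFib f.left
    exact ⟨Over.mk (p ≫ B.hom), Over.homMk i (by rw [show (Over.mk (p ≫ B.hom)).hom = p ≫ B.hom from rfl, ← Category.assoc, hfac, Over.w f]),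
      Over.homMk p rfl, hi, hp, hp', by ext; exact hfac⟩
  factor_trivCof_fib {A B} f := by
    obtain ⟨Z, i, p, hi, hi', hp, hfac⟩ := M.factor_trivCof_fib f.left
    exact ⟨Over.mk (p ≫ B.hom), Over.homMk i (by rw [show (Over.mk (p ≫ B.hom)).hom = p ≫ B.hom from rfl, ← Category.assoc, hfac, Over.w f]),
      Over.homMk p rfl, hi, hi', hp, by ext; exact hfac⟩

noncomputable instance (X : C) : HasInitial (Under X) :=
  Under.mkIdInitial.hasInitial

noncomputable instance (X : C) : HasTerminal (Over X) :=
  Over.mkIdTerminal.hasTerminal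

/-- The terminal object of `(X ↓ C)` is `X ⟶ *`. -/
noncomputable def underMkTerminal [HasTerminal C] (X : C) :
    IsTerminal (Under.mk (terminal.from X)) :=
  IsTerminal.ofUniqueHom (fun u => Under.homMk (terminal.from u.right)
      (terminal.hom_ext _ _))
    (fun u m => by ext; exact terminal.hom_ext _ _)

noncomputable instance [HasTerminal C] (X : C) : HasTerminal (Under X) :=
  (underMkTerminal X).hasTerminal

/-- The initial object of `(C ↓ X)` is `∅ ⟶ X`. -/
noncomputable def overMkInitial [HasInitial C] (X : C) :
    IsInitial (Over.mk (initial.to X)) :=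
  IsInitial.ofUniqueHom (fun u => Over.homMk (initial.to u.left)
      (initial.hom_ext _ _))
    (fun u m => by ext; exact initial.hom_ext _ _)

noncomputable instance [HasInitial C] (X : C) : HasInitial (Over X) :=
  (overMkInitial X).hasInitial

/-- A Quillen adjunction between model categories: an adjoint pair whose left adjoint
preserves cofibrations and acyclic cofibrations. -/
structure QuillenAdjunction {C : Type u} [Category.{v} C] {D : Type u'} [Category.{v'} D]
    (M : ModelStruct C) (N : ModelStruct D) (F : C ⥤ D) (G : D ⥤ C) where
  adj : F ⊣ G
  map_cof : ∀ {A B : C} (f : A ⟶ B), M.cof f → N.cof (F.map f)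
  map_trivCof_weq : ∀ {A B : C} (f : A ⟶ B), M.cof f → M.weq f → N.weq (F.map f)

/-- A Quillen adjunction is a Quillen equivalence if for every cofibrant `A` and fibrant `B`,
a map `F A ⟶ B` is a weak equivalence iff its adjunct `A ⟶ G B` is. -/
def IsQuillenEquivalence {C : Type u} [Category.{v} C] {D : Type u'} [Category.{v'} D]
    [HasInitial C] [HasTerminal D]
    (M : ModelStruct C) (N : ModelStruct D) {F : C ⥤ D} {G : D ⥤ C} (adj : F ⊣ G) : Prop :=
  ∀ (A : C) (B : D), M.Cofibrant A → N.Fibrant B →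
    ∀ f : F.obj A ⟶ B, N.weq f ↔ M.weq ((adj.homEquiv A B) f)


/-- A closed model category is right proper if every base change of a weak equivalence along
a fibration is a weak equivalence. -/
def ModelStruct.RightProper {C : Type u} [Category.{v} C] [HasPullbacks C]
    (M : ModelStruct C) : Prop :=
  ∀ {X Y Z : C} (g : X ⟶ Y) (u : Z ⟶ Y), M.weq g → M.fib u → M.weq (pullback.snd g u)

/-!
For `B` over `Y`, the adjunct of `p : A ⟶ g^! B` is `p` followed by the base change
`q : X ×_Y B ⟶ B` of `g` along `B ⟶ Y`. By two-out-of-three, the Quillen equivalence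
condition at a fibrant `B` therefore says exactly that `q` is a weak equivalence: for one
direction test it on a cofibrant replacement `A ⟶ g^! B`. Right properness is the same
condition, up to the symmetry of the pullback.
-/

namespace IsRetractOfArrow

lemma of_arrowIso {A B A' B' : C} {f : A ⟶ B} {g : A' ⟶ B'}
    (e : Arrow.mk f ≅ Arrow.mk g) : IsRetractOfArrow f g :=
  ⟨e.hom, e.inv, e.hom_inv_id⟩

end IsRetractOfArrow

lemma Over.mapPullbackAdj_homEquiv_symm_left [HasPullbacks C]
    {X Y : C} (g : X ⟶ Y) {A : Over X} {B : Over Y} (p : A ⟶ (Over.pullback g).obj B) :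
    (((Over.mapPullbackAdj g).homEquiv A B).symm p).left = p.left ≫ pullback.fst B.hom g := by
  simp [Adjunction.homEquiv_counit]

namespace ModelStruct

variable (M : ModelStruct C)

lemma weq_comp_iff_of_weq_right {X Y Z : C} (f : X ⟶ Y) {g : Y ⟶ Z} (hg : M.weq g) :
    M.weq (f ≫ g) ↔ M.weq f :=
  ⟨M.weq_cancel_right f g hg, fun hf => M.weq_comp f g hf hg⟩

lemma weq_iff_of_arrowIso {A B A' B' : C} {f : A ⟶ B} {g : A' ⟶ B'}
    (e : Arrow.mk f ≅ Arrow.mk g) : M.weq f ↔ M.weq g :=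
  ⟨M.weq_retract (.of_arrowIso e.symm), M.weq_retract (.of_arrowIso e)⟩

lemma fib_iff_of_arrowIso {A B A' B' : C} {f : A ⟶ B} {g : A' ⟶ B'}
    (e : Arrow.mk f ≅ Arrow.mk g) : M.fib f ↔ M.fib g :=
  ⟨M.fib_retract (.of_arrowIso e.symm), M.fib_retract (.of_arrowIso e)⟩

lemma fibrant_iff_of_isTerminal [HasTerminal C] {T : C} (hT : IsTerminal T) (A : C) :
    M.Fibrant A ↔ M.fib (hT.from A) :=
  M.fib_iff_of_arrowIso
    (Arrow.isoMk (Iso.refl A) (terminalIsoIsTerminal hT) (hT.hom_ext _ _))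

lemma exists_cofibrant_weq [HasInitial C] (X : C) :
    ∃ (A : C) (p : A ⟶ X), M.Cofibrant A ∧ M.weq p := by
  obtain ⟨A, i, p, hi, -, hp, -⟩ := M.factor_cof_trivFib (initial.to X)
  exact ⟨A, p, by rwa [Cofibrant, initial.hom_ext (initial.to A) i], hp⟩

lemma fibrant_over_iff (X : C) (B : Over X) : (M.over X).Fibrant B ↔ M.fib B.hom := by
  rw [fibrant_iff_of_isTerminal _ Over.mkIdTerminal]
  show M.fib (Over.mkIdTerminal.from B).left ↔ _
  rw [Over.mkIdTerminal_from_left]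

lemma weq_pullback_snd_iff_fst [HasPullbacks C] {X Y Z : C} (g : X ⟶ Y) (u : Z ⟶ Y) :
    M.weq (pullback.snd g u) ↔ M.weq (pullback.fst u g) :=
  M.weq_iff_of_arrowIso (Arrow.isoMk (pullbackSymmetry g u) (Iso.refl Z) (by simp))

lemma isQuillenEquivalence_mapPullbackAdj_iff [HasPullbacks C] [HasInitial C] {X Y : C}
    (g : X ⟶ Y) :
    IsQuillenEquivalence (M.over X) (M.over Y) (Over.mapPullbackAdj g) ↔
      ∀ B : Over Y, M.fib B.hom → M.weq (pullback.fst B.hom g) := by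
  constructor
  · intro H B hB
    obtain ⟨A, p, hA, hp⟩ := (M.over X).exists_cofibrant_weq ((Over.pullback g).obj B)
    have hf : M.weq (((Over.mapPullbackAdj g).homEquiv A B).symm p).left :=
      (H A B hA ((M.fibrant_over_iff Y B).2 hB) _).2 (by rwa [Equiv.apply_symm_apply])
    rw [Over.mapPullbackAdj_homEquiv_symm_left] at hf
    exact M.weq_cancel_left _ _ hp hf
  · intro H A B _ hB f
    obtain ⟨p, rfl⟩ := ((Over.mapPullbackAdj g).homEquiv A B).symm.surjective f
    rw [Equiv.apply_symm_apply]
    show M.weq (((Over.mapPullbackAdj g).homEquiv A B).symm p).left ↔ M.weq p.left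
    rw [Over.mapPullbackAdj_homEquiv_symm_left]
    exact M.weq_comp_iff_of_weq_right p.left (H B ((M.fibrant_over_iff Y B).1 hB))

end ModelStruct

/-- **Statement 15.** A closed model category `C` is right proper if and only if
`(g_*, g^!) : (C ↓ X) → (C ↓ Y)` is a Quillen equivalence for every weak equivalence
`g : X ⟶ Y`. -/
theorem right_proper_iff {C : Type u} [Category.{v} C]
    [HasLimits C] [HasColimits C] (M : ModelStruct C) :
    M.RightProper ↔
      ∀ {X Y : C} (g : X ⟶ Y), M.weq g →
        IsQuillenEquivalence (M.over X) (M.over Y) (Over.mapPullbackAdj g) := by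
  simp only [M.isQuillenEquivalence_mapPullbackAdj_iff]
  constructor
  · intro hRP X Y g hg B hB
    exact (M.weq_pullback_snd_iff_fst g B.hom).1 (hRP g B.hom hg hB)
  · intro H X Y Z g u hg hu
    exact (M.weq_pullback_snd_iff_fst g u).2 (H g hg (Over.mk u) hu)
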